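/- If g and e are permutations of Cantor space such that the supports of g and e intersect exactly in the single cone 𝔠_γ, the restriction of g to 𝔠_γ maps it bijectively onto a cone disjoint from the support of e, and the restriction of e to 𝔠_γ maps it bijectively onto a cone disjoint from the support of g, then the commutator [g,e] = g⁻¹e⁻¹ge is a 3-cycle of cones (γ γ·e γ·g), i.e., it cyclically permutes the three cones 𝔠_γ, (𝔠_γ)e, (𝔠_γ)g by the induced prefix substitutions and fixes everything else. -/
import Mathlib


/-- Cantor space `{0,1}^ℕ`. -/
abbrev Cantor : Type := ℕ → Bool

/-- Finite binary words (addresses). -/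
abbrev Word : Type := List Bool

/-- Prepend a finite word to a point of Cantor space: `app α w = αw`. -/
def app (α : Word) (w : Cantor) : Cantor := fun n =>
  if h : n < α.length then α.get ⟨n, h⟩ else w (n - α.length)

/-- The first `n` letters of a point of Cantor space. -/
def ctake (p : Cantor) (n : ℕ) : Word := (List.range n).map p

/-- Remove the first `n` letters of a point of Cantor space. -/
def cdrop (p : Cantor) (n : ℕ) : Cantor := fun k => p (n + k)

/-- The cone at address `α`: points having `α` as a prefix. -/
def cone (α : Word) : Set Cantor := {p | ctake p α.length = α}

/-- Two words are incomparable if neither is a prefix of the other. -/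
def Incomp (α β : Word) : Prop := ¬ α <+: β ∧ ¬ β <+: α

/-- The swap `⟨α β⟩`: exchanges the cones at `α` and `β` by prefix
substitution and fixes everything else. -/
def swap (α β : Word) (p : Cantor) : Cantor :=
  if ctake p α.length = α then app β (cdrop p α.length)
  else if ctake p β.length = β then app α (cdrop p β.length)
  else p

/-- The 3-cycle `(a b c)` of cones: `aw ↦ bw`, `bw ↦ cw`, `cw ↦ aw`,
fixing all other points. -/
def cyc3 (a b c : Word) (p : Cantor) : Cantor :=
  if ctake p a.length = a then app b (cdrop p a.length)
  else if ctake p b.length = b then app c (cdrop p b.length)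
  else if ctake p c.length = c then app a (cdrop p c.length)
  else p


lemma ctake_app (α : Word) (w : Cantor) : ctake (app α w) α.length = α := by
  apply List.ext_getElem (by simp [ctake])
  intro i h1 h2
  simp [ctake, app, h2]

lemma app_cdrop (α : Word) (p : Cantor) (h : ctake p α.length = α) :
    app α (cdrop p α.length) = p := by
  funext n
  by_cases hn : n < α.length
  · have hn' : n < (ctake p α.length).length := by simpa [ctake] using hn
    have : (ctake p α.length)[n] = p n := by simp [ctake]
    simp only [app, hn, dif_pos, List.get_eq_getElem]
    rw [← this]
    exact List.getElem_of_eq h.symm hn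
  · simp [app, hn, cdrop]
    congr 1; omega

lemma ctake_prefix (p : Cantor) {m n : ℕ} (h : m ≤ n) : ctake p m <+: ctake p n := by
  unfold ctake
  have : List.range m = (List.range n).take m := by
    rw [List.take_range]; congr 1; omega
  rw [this]
  exact (List.take_prefix m (List.range n)).map p

lemma cones_disjoint {α β : Word} (h : Incomp α β) {p : Cantor}
    (hα : ctake p α.length = α) (hβ : ctake p β.length = β) : False := by
  rcases le_total α.length β.length with hl | hl
  · exact h.1 (hα ▸ hβ ▸ ctake_prefix p hl)
  · exact h.2 (hβ ▸ hα ▸ ctake_prefix p hl)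

lemma app_ne {α β : Word} (h : Incomp α β) (w w' : Cantor) : app α w ≠ app β w' := by
  intro he
  exact cones_disjoint h (ctake_app α w) (he ▸ ctake_app β w')

/-- If the supports of `g` and `e` meet exactly in the cone at `γ`, on which
`g` acts by `γw ↦ δw` and `e` by `γw ↦ εw`, with `cone δ` disjoint from the
support of `e` and `cone ε` disjoint from the support of `g`, then the
commutator `[g,e] = g⁻¹e⁻¹ge` (right action) is the 3-cycle `(γ γ·e γ·g)`. -/
theorem commutator_is_three_cycle (g e : Equiv Cantor Cantor) (γ δ ε : Word)
    (hγδ : Incomp γ δ) (hγε : Incomp γ ε) (hδε : Incomp δ ε)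
    (hg : ∀ w : Cantor, g (app γ w) = app δ w)
    (he : ∀ w : Cantor, e (app γ w) = app ε w)
    (hspt : {p : Cantor | g p ≠ p} ∩ {p : Cantor | e p ≠ p} = cone γ)
    (hδe : cone δ ∩ {p : Cantor | e p ≠ p} = ∅)
    (hεg : cone ε ∩ {p : Cantor | g p ≠ p} = ∅) :
    ∀ p : Cantor, e (g (e.symm (g.symm p))) = cyc3 γ ε δ p := by
  have hsupp : ∀ p : Cantor, (g p ≠ p ∧ e p ≠ p) ↔ ctake p γ.length = γ := by
    intro p
    simpa [cone, Set.ext_iff, Set.mem_setOf_eq] using (Set.ext_iff.mp hspt p)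
  have hδe' : ∀ p : Cantor, ctake p δ.length = δ → e p = p := by
    intro p hp
    by_contra h
    exact absurd (Set.ext_iff.mp hδe p |>.mp ⟨hp, h⟩) (by simp)
  have hεg' : ∀ p : Cantor, ctake p ε.length = ε → g p = p := by
    intro p hp
    by_contra h
    exact absurd (Set.ext_iff.mp hεg p |>.mp ⟨hp, h⟩) (by simp)
  intro p
  unfold cyc3
  split_ifs with h1 h2 h3
  · -- p ∈ cone γ
    set w := cdrop p γ.length with hw
    have hp : app γ w = p := app_cdrop γ p h1
    set q := g.symm p with hq
    have hgq : g q = p := g.apply_symm_apply p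
    have hqγ : ctake q γ.length ≠ γ := by
      intro h
      have h' := hg (cdrop q γ.length)
      rw [app_cdrop γ q h] at h'
      exact cones_disjoint hγδ h1 (by rw [← hgq, h']; exact ctake_app δ _)
    have hqg : g q ≠ q := by
      intro h
      have hqp : q = p := by rw [← hgq, h]
      have : g p = p := hqp ▸ hgq
      rw [← hp, hg] at this
      exact app_ne (⟨hγδ.2, hγδ.1⟩) w w this
    have hqe : e q = q := by
      by_contra hh
      exact hqγ ((hsupp q).mp ⟨hqg, hh⟩)
    have hes : e.symm q = q := e.symm_apply_eq.mpr hqe.symm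
    rw [hes, hgq, ← hp, he]
  · -- p ∈ cone ε
    set w := cdrop p ε.length with hw
    have hp : app ε w = p := app_cdrop ε p h2
    have hgp : g p = p := hεg' p h2
    have hgs : g.symm p = p := g.symm_apply_eq.mpr hgp.symm
    have hes : e.symm p = app γ w := by rw [Equiv.symm_apply_eq, he, hp]
    rw [hgs, hes, hg]
    exact hδe' (app δ w) (ctake_app δ w)
  · -- p ∈ cone δ
    set w := cdrop p δ.length with hw
    have hp : app δ w = p := app_cdrop δ p h3
    have hgs : g.symm p = app γ w := by rw [Equiv.symm_apply_eq, hg, hp]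
    set q := e.symm (app γ w) with hq
    have heq : e q = app γ w := e.apply_symm_apply _
    have hqγ : ctake q γ.length ≠ γ := by
      intro h
      have h' := he (cdrop q γ.length)
      rw [app_cdrop γ q h, heq] at h'
      exact app_ne hγε w _ h' 
    have hqe : e q ≠ q := by
      intro h
      have hq' : q = app γ w := by rw [← heq, h]
      have : e (app γ w) = app γ w := by rw [← hq', h, hq']
      rw [he] at this
      exact app_ne (⟨hγε.2, hγε.1⟩) w w this
    have hqg : g q = q := by
      by_contra hh
      exact hqγ ((hsupp q).mp ⟨hh, hqe⟩)
    rw [hgs, hqg, heq]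
  · -- p in none of the cones
    by_cases hgp : g p = p
    · by_cases hep : e p = p
      · rw [g.symm_apply_eq.mpr hgp.symm, e.symm_apply_eq.mpr hep.symm, hgp, hep]
      · set q := e.symm p with hq
        have heq : e q = p := e.apply_symm_apply p
        have hqγ : ctake q γ.length ≠ γ := by
          intro h
          have h' := he (cdrop q γ.length)
          rw [app_cdrop γ q h] at h'
          exact h2 (by rw [← heq, h']; exact ctake_app ε _)
        have hqe : e q ≠ q := by
          intro h
          have hqp : q = p := by rw [← heq, h]
          exact hep (hqp ▸ heq)
        have hqg : g q = q := by
          by_contra hh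
          exact hqγ ((hsupp q).mp ⟨hh, hqe⟩)
        rw [g.symm_apply_eq.mpr hgp.symm, ← hq, hqg, heq]
    · have hep : e p = p := by
        by_contra hh
        exact h1 ((hsupp p).mp ⟨hgp, hh⟩)
      set q := g.symm p with hq
      have hgq : g q = p := g.apply_symm_apply p
      have hqγ : ctake q γ.length ≠ γ := by
        intro h
        have h' := hg (cdrop q γ.length)
        rw [app_cdrop γ q h] at h'
        exact h3 (by rw [← hgq, h']; exact ctake_app δ _)
      have hqg' : g q ≠ q := by
        intro h
        have hqp : q = p := by rw [← hgq, h]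
        exact hgp (hqp ▸ hgq)
      have hqe : e q = q := by
        by_contra hh
        exact hqγ ((hsupp q).mp ⟨hqg', hh⟩)
      rw [e.symm_apply_eq.mpr hqe.symm, hgq, hep]
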